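/- arXiv:1902.04938 — 2 statements merged into one kernel-verified Lean document; each statement's English description precedes it below -/
import Mathlib

section
/- K-coalescing preserves snapshot equivalence: for every temporal K-element 𝒯 we have 𝒯 ~ coal(𝒯), i.e., τ_T(coal(𝒯)) = τ_T(𝒯) for every time point T. -/
open scoped Classical

namespace TemporalK

variable {K : Type*}

/-- An interval over the time domain `{0, ..., N-1}`: a pair `(b, e)` with `b < e ≤ N`. -/
abbrev TInterval (N : ℕ) := {I : Fin (N + 1) × Fin (N + 1) // I.1 < I.2}

/-- A temporal `K`-element: a function assigning to each interval an element of `K`. -/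
abbrev TempEl (N : ℕ) (K : Type*) := TInterval N → K

/-- The interval `I = (b, e)` contains the time point `T` iff `b ≤ T < e`. -/
def Contains {N : ℕ} (I : TInterval N) (T : ℕ) : Prop :=
  (I.val.1 : ℕ) ≤ T ∧ T < (I.val.2 : ℕ)

/-- The timeslice of `𝒯` at time point `T`: the sum of `𝒯 I` over all intervals `I`
containing `T`. -/
noncomputable def slice {N : ℕ} [CommSemiring K] (𝒯 : TempEl N K) (T : ℕ) : K :=
  ∑ I ∈ Finset.univ.filter (fun I : TInterval N => Contains I T), 𝒯 I

/-- `T` is an (annotation) changepoint of `𝒯` iff `T = 0` or the timeslices at `T - 1`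
and `T` differ. -/
def Changepoint {N : ℕ} [CommSemiring K] (𝒯 : TempEl N K) (T : ℕ) : Prop :=
  T = 0 ∨ slice 𝒯 (T - 1) ≠ slice 𝒯 T

/-- `I = (b, e)` is a changepoint interval of `𝒯` iff `b` is a changepoint, `e` is a
changepoint or equals `N`, and no time point strictly between `b` and `e` is a changepoint. -/
def CPInterval {N : ℕ} [CommSemiring K] (𝒯 : TempEl N K) (I : TInterval N) : Prop :=
  Changepoint 𝒯 (I.val.1 : ℕ) ∧
    (Changepoint 𝒯 (I.val.2 : ℕ) ∨ (I.val.2 : ℕ) = N) ∧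
    ∀ T : ℕ, (I.val.1 : ℕ) < T → T < (I.val.2 : ℕ) → ¬ Changepoint 𝒯 T

/-- `K`-coalescing: maps changepoint intervals `(b, e)` to the timeslice at `b` and all
other intervals to `0`. -/
noncomputable def coal {N : ℕ} [CommSemiring K] (𝒯 : TempEl N K) : TempEl N K :=
  fun I => if CPInterval 𝒯 I then slice 𝒯 (I.val.1 : ℕ) else 0

/-- Snapshot equivalence: equal timeslices at every time point. -/
def SnapEq {N : ℕ} [CommSemiring K] (k k' : TempEl N K) : Prop :=
  ∀ T : ℕ, T < N → slice k T = slice k' T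

/-- A temporal `K`-element is coalesced iff it is the `K`-coalescing of some
temporal `K`-element. -/
def Coalesced {N : ℕ} [CommSemiring K] (k : TempEl N K) : Prop :=
  ∃ 𝒯 : TempEl N K, k = coal 𝒯

/-- Pointwise addition of temporal `K`-elements. -/
def padd {N : ℕ} [CommSemiring K] (k k' : TempEl N K) : TempEl N K :=
  fun I => k I + k' I

/-- Pointwise multiplication of temporal `K`-elements:
`(k ·_P k')(I) = Σ k(I')·k'(I'')` over all pairs `(I', I'')` whose intersection is
nonempty and equals `I`. -/
noncomputable def pmul {N : ℕ} [CommSemiring K] (k k' : TempEl N K) : TempEl N K :=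
  fun I =>
    ∑ p ∈ Finset.univ.filter (fun p : TInterval N × TInterval N =>
        max (p.1.val.1 : ℕ) (p.2.val.1 : ℕ) < min (p.1.val.2 : ℕ) (p.2.val.2 : ℕ) ∧
        (I.val.1 : ℕ) = max (p.1.val.1 : ℕ) (p.2.val.1 : ℕ) ∧
        (I.val.2 : ℕ) = min (p.1.val.2 : ℕ) (p.2.val.2 : ℕ)),
      k p.1 * k' p.2

/-- Addition of the period semiring: coalesced pointwise addition. -/
noncomputable def tadd {N : ℕ} [CommSemiring K] (k k' : TempEl N K) : TempEl N K :=
  coal (padd k k')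

/-- Multiplication of the period semiring: coalesced pointwise multiplication. -/
noncomputable def tmul {N : ℕ} [CommSemiring K] (k k' : TempEl N K) : TempEl N K :=
  coal (pmul k k')

/-- The zero of the period semiring: maps every interval to `0`. -/
def zeroT (N : ℕ) (K : Type*) [CommSemiring K] : TempEl N K := fun _ => 0

/-- The one of the period semiring: maps the interval `(0, N)` to `1` and every other
interval to `0`. -/
def oneT (N : ℕ) (K : Type*) [CommSemiring K] : TempEl N K :=
  fun I => if (I.val.1 : ℕ) = 0 ∧ (I.val.2 : ℕ) = N then 1 else 0

/-- Encoding of an annotation history `f : time points → K` as a coalesced temporal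
`K`-element: coalesce the element assigning `f T` to each singleton interval `(T, T+1)`. -/
noncomputable def enc {N : ℕ} [CommSemiring K] (f : Fin N → K) : TempEl N K :=
  coal (fun I =>
    if h : (I.val.2 : ℕ) = (I.val.1 : ℕ) + 1 then
      f ⟨(I.val.1 : ℕ), by have := I.val.2.isLt; omega⟩
    else 0)

/-- The natural preorder of the semiring `K`. -/
def nle [CommSemiring K] (a b : K) : Prop := ∃ c, a + c = b

/-- The natural preorder of the period semiring (on coalesced temporal `K`-elements). -/
def tle {N : ℕ} [CommSemiring K] (k k' : TempEl N K) : Prop :=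
  ∃ k'' : TempEl N K, Coalesced k'' ∧ tadd k k'' = k'

/-- The pointwise monus: assigns `τ_T(k) −_K τ_T(k')` to each singleton interval
`(T, T+1)` and `0` to every non-singleton interval. -/
noncomputable def pmonus {N : ℕ} [CommSemiring K] (monus : K → K → K)
    (k k' : TempEl N K) : TempEl N K :=
  fun I =>
    if (I.val.2 : ℕ) = (I.val.1 : ℕ) + 1 then
      monus (slice k (I.val.1 : ℕ)) (slice k' (I.val.1 : ℕ))
    else 0

/-- The monus of the period semiring: coalesced pointwise monus. -/
noncomputable def tmonus {N : ℕ} [CommSemiring K] (monus : K → K → K)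
    (k k' : TempEl N K) : TempEl N K :=
  coal (pmonus monus k k')

/-! Every time point `T < N` lies in exactly one changepoint interval `(b, e)`, namely the one
from the last changepoint `≤ T` to the next changepoint (or `N`). Hence the timeslice of
`coal 𝒯` at `T` is `τ_b(𝒯)`, and since no changepoint lies in `(b, T]`, the timeslices of `𝒯`
are constant from `b` to `T`. -/

variable {N : ℕ} [CommSemiring K] {𝒯 : TempEl N K}

theorem slice_eq_of_not_changepoint {b t : ℕ} (hbt : b ≤ t)
    (h : ∀ s, b < s → s ≤ t → ¬ Changepoint 𝒯 s) : slice 𝒯 b = slice 𝒯 t := by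
  induction t, hbt using Nat.le_induction with
  | base => rfl
  | succ t hbt ih =>
    have hstep := h (t + 1) (by omega) le_rfl
    simp only [Changepoint, not_or, not_not, Nat.add_sub_cancel] at hstep
    rw [ih fun s hs hst => h s hs (by omega), hstep.2]

theorem CPInterval.slice_fst_eq {I : TInterval N} {T : ℕ} (hI : CPInterval 𝒯 I)
    (hT : Contains I T) : slice 𝒯 I.val.1 = slice 𝒯 T :=
  slice_eq_of_not_changepoint hT.1 fun s hs hsT => hI.2.2 s hs (by have := hT.2; omega)

theorem CPInterval.fst_le_of_contains {I J : TInterval N} {T : ℕ} (hI : CPInterval 𝒯 I)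
    (hJ : CPInterval 𝒯 J) (hIT : Contains I T) (hJT : Contains J T) :
    (I.val.1 : ℕ) ≤ J.val.1 := by
  by_contra! hlt
  exact hJ.2.2 _ hlt (by have := hIT.1; have := hJT.2; omega) hI.1

theorem CPInterval.snd_le_of_contains {I J : TInterval N} {T : ℕ} (hI : CPInterval 𝒯 I)
    (hJ : CPInterval 𝒯 J) (hIT : Contains I T) (hJT : Contains J T) :
    (I.val.2 : ℕ) ≤ J.val.2 := by
  by_contra! hlt
  rcases hJ.2.1 with hcp | hJN
  · exact hI.2.2 _ (by have := hIT.1; have := hJT.2; omega) hlt hcp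
  · have := I.val.2.isLt
    omega

theorem CPInterval.eq_of_contains {I J : TInterval N} {T : ℕ} (hI : CPInterval 𝒯 I)
    (hJ : CPInterval 𝒯 J) (hIT : Contains I T) (hJT : Contains J T) : I = J :=
  Subtype.ext <| Prod.ext
    (Fin.ext <| le_antisymm (hI.fst_le_of_contains hJ hIT hJT)
      (hJ.fst_le_of_contains hI hJT hIT))
    (Fin.ext <| le_antisymm (hI.snd_le_of_contains hJ hIT hJT)
      (hJ.snd_le_of_contains hI hJT hIT))

theorem exists_cpInterval_contains {T : ℕ} (hT : T < N) :
    ∃ I : TInterval N, CPInterval 𝒯 I ∧ Contains I T := by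
  have hEnd : ∃ e, T < e ∧ (Changepoint 𝒯 e ∨ e = N) := ⟨N, hT, Or.inr rfl⟩
  set b := Nat.findGreatest (Changepoint 𝒯) T
  set e := Nat.find hEnd
  have hbT : b ≤ T := Nat.findGreatest_le T
  obtain ⟨hTe, he⟩ := Nat.find_spec hEnd
  have heN : e ≤ N := Nat.find_min' hEnd ⟨hT, Or.inr rfl⟩
  refine ⟨⟨(⟨b, by omega⟩, ⟨e, by omega⟩), Fin.mk_lt_mk.mpr (by omega)⟩,
    ⟨Nat.findGreatest_spec (Nat.zero_le T) (Or.inl rfl), he, fun s hbs hse hs => ?_⟩, hbT, hTe⟩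
  rcases le_or_gt s T with hsT | hTs
  · exact Nat.findGreatest_is_greatest hbs hsT hs
  · exact Nat.find_min hEnd hse ⟨hTs, Or.inl hs⟩

theorem slice_coal (T : ℕ) (hT : T < N) : slice (coal 𝒯) T = slice 𝒯 T := by
  obtain ⟨I, hI, hIT⟩ := exists_cpInterval_contains (𝒯 := 𝒯) hT
  calc slice (coal 𝒯) T = coal 𝒯 I := by
        refine Finset.sum_eq_single_of_mem I (by simpa using hIT) fun J hJT hJI => ?_
        rw [coal, if_neg fun hJ => hJI (hJ.eq_of_contains hI (by simpa using hJT) hIT)]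
    _ = slice 𝒯 I.val.1 := if_pos hI
    _ = slice 𝒯 T := hI.slice_fst_eq hIT

end TemporalK

open TemporalK

theorem coal_snapshot_equiv_general {N : ℕ} {K : Type*} [CommSemiring K]
    (𝒯 : TempEl N K) :
    SnapEq 𝒯 (coal 𝒯) ∧ ∀ T : ℕ, T < N → slice (coal 𝒯) T = slice 𝒯 T :=
  ⟨fun T hT => (slice_coal T hT).symm, slice_coal⟩

theorem coal_snapshot_equiv {N : ℕ} (hN : 1 ≤ N) {K : Type*} [CommSemiring K]
    (𝒯 : TempEl N K) :
    SnapEq 𝒯 (coal 𝒯) ∧ ∀ T : ℕ, T < N → slice (coal 𝒯) T = slice 𝒯 T :=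
  coal_snapshot_equiv_general 𝒯
end

section
/- For every time point T, the timeslice map τ_T is a semiring homomorphism from the period semiring of coalesced temporal K-elements to K: τ_T(0_T) = 0, τ_T(1_T) = 1, and for all coalesced temporal K-elements k, k' we have τ_T(k +_T k') = τ_T(k) + τ_T(k') and τ_T(k ·_T k') = τ_T(k) · τ_T(k'). -/
open scoped Classical

open TemporalK

section Aux
variable {K : Type*}

lemma TInterval.ext' {N : ℕ} {I J : TInterval N}
    (h1 : (I.val.1 : ℕ) = (J.val.1 : ℕ)) (h2 : (I.val.2 : ℕ) = (J.val.2 : ℕ)) : I = J :=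
  Subtype.ext (Prod.ext (Fin.ext h1) (Fin.ext h2))

lemma slice_const {N : ℕ} [CommSemiring K] (𝒯 : TempEl N K) :
    ∀ {b T : ℕ}, b ≤ T → (∀ t, b < t → t ≤ T → ¬ Changepoint 𝒯 t) →
    TemporalK.slice 𝒯 b = TemporalK.slice 𝒯 T := by
  intro b T
  induction T with
  | zero =>
      intro hb _
      have : b = 0 := by omega
      rw [this]
  | succ n ih =>
      intro hb h
      rcases Nat.lt_or_ge b (n + 1) with h1 | h2
      · have hnc : ¬ Changepoint 𝒯 (n + 1) := h (n + 1) h1 le_rfl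
        have hs : TemporalK.slice 𝒯 n = TemporalK.slice 𝒯 (n + 1) := by
          by_contra hc
          exact hnc (Or.inr (by simpa using hc))
        rw [← hs]
        exact ih (by omega) (fun t ht1 ht2 => h t ht1 (by omega))
      · have : b = n + 1 := le_antisymm hb h2
        rw [this]

lemma slice_coal {N : ℕ} [CommSemiring K] (𝒯 : TempEl N K) (T : ℕ) (hT : T < N) :
    TemporalK.slice (coal 𝒯) T = TemporalK.slice 𝒯 T := by
  classical
  set b := Nat.findGreatest (Changepoint 𝒯) T with hbdef
  have hbT : b ≤ T := Nat.findGreatest_le T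
  have hbc : Changepoint 𝒯 b := Nat.findGreatest_spec (Nat.zero_le T) (Or.inl rfl)
  have hbmax : ∀ t, b < t → t ≤ T → ¬ Changepoint 𝒯 t := fun t h1 h2 =>
    Nat.findGreatest_is_greatest h1 h2
  have hE : ∃ s, T < s ∧ s ≤ N ∧ (Changepoint 𝒯 s ∨ s = N) := ⟨N, hT, le_rfl, Or.inr rfl⟩
  set e := Nat.find hE with hedef
  obtain ⟨heT, heN, hec⟩ := Nat.find_spec hE
  have hemin : ∀ s, T < s → s ≤ N → (Changepoint 𝒯 s ∨ s = N) → e ≤ s := fun s h1 h2 h3 =>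
    Nat.find_min' hE ⟨h1, h2, h3⟩
  have hbe : b < e := lt_of_le_of_lt hbT heT
  set I₀ : TInterval N := ⟨(⟨b, by omega⟩, ⟨e, by omega⟩), by
    simp only [Fin.mk_lt_mk]; exact hbe⟩ with hI0
  have hI01 : (I₀.val.1 : ℕ) = b := rfl
  have hI02 : (I₀.val.2 : ℕ) = e := rfl
  have hI0cp : CPInterval 𝒯 I₀ := by
    refine ⟨hbc, hec, ?_⟩
    intro t h1 h2 hc
    rw [hI01] at h1; rw [hI02] at h2
    rcases le_or_gt t T with h3 | h3
    · exact hbmax t h1 h3 hc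
    · have : e ≤ t := hemin t h3 (by omega) (Or.inl hc); omega
  have huniq : ∀ I : TInterval N, Contains I T → CPInterval 𝒯 I → I = I₀ := by
    intro I hIT hIcp
    obtain ⟨hT1, hT2⟩ := hIT
    obtain ⟨hc1, hc2, hc3⟩ := hIcp
    have hIN : (I.val.2 : ℕ) ≤ N := by have := I.val.2.isLt; omega
    have hb1 : (I.val.1 : ℕ) ≤ b := Nat.le_findGreatest hT1 hc1
    have hb2 : b ≤ (I.val.1 : ℕ) := by
      by_contra hlt
      exact hc3 b (by omega) (by omega) hbc
    have he1 : e ≤ (I.val.2 : ℕ) := hemin _ hT2 hIN hc2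
    have he2 : (I.val.2 : ℕ) ≤ e := by
      by_contra hlt
      rcases hec with hce | hce
      · exact hc3 e (by omega) (by omega) hce
      · omega
    exact TInterval.ext' (by omega) (by omega)
  unfold TemporalK.slice coal
  rw [Finset.sum_eq_single_of_mem I₀
      (by rw [Finset.mem_filter]; simp only [Finset.mem_univ, true_and, Contains, hI01, hI02]
          exact ⟨hbT, heT⟩)]
  · rw [if_pos hI0cp, hI01]
    exact slice_const 𝒯 hbT hbmax
  · intro I hI hne
    rw [if_neg]
    intro hcp
    exact hne (huniq I (Finset.mem_filter.mp hI).2 hcp)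

lemma slice_padd {N : ℕ} [CommSemiring K] (k k' : TempEl N K) (T : ℕ) :
    TemporalK.slice (padd k k') T = TemporalK.slice k T + TemporalK.slice k' T := by
  unfold TemporalK.slice padd
  exact Finset.sum_add_distrib

lemma slice_pmul {N : ℕ} [CommSemiring K] (k k' : TempEl N K) (T : ℕ) (hT : T < N) :
    TemporalK.slice (pmul k k') T = TemporalK.slice k T * TemporalK.slice k' T := by
  classical
  unfold TemporalK.slice pmul
  rw [Finset.sum_mul_sum]
  have hrhs :
      (∑ I' ∈ Finset.univ.filter (fun I : TInterval N => Contains I T),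
        ∑ I'' ∈ Finset.univ.filter (fun I : TInterval N => Contains I T), k I' * k' I'')
      = ∑ p ∈ Finset.univ.filter (fun p : TInterval N × TInterval N =>
          Contains p.1 T ∧ Contains p.2 T), k p.1 * k' p.2 := by
    rw [← Finset.sum_product']
    congr 1
    ext p
    simp [Finset.mem_product, Finset.mem_filter, and_assoc, and_left_comm, and_comm]
  rw [hrhs]
  have hswap :
      (∑ I ∈ Finset.univ.filter (fun I : TInterval N => Contains I T),
        ∑ p ∈ Finset.univ.filter (fun p : TInterval N × TInterval N =>
          max (p.1.val.1 : ℕ) (p.2.val.1 : ℕ) < min (p.1.val.2 : ℕ) (p.2.val.2 : ℕ) ∧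
          (I.val.1 : ℕ) = max (p.1.val.1 : ℕ) (p.2.val.1 : ℕ) ∧
          (I.val.2 : ℕ) = min (p.1.val.2 : ℕ) (p.2.val.2 : ℕ)), k p.1 * k' p.2)
      = ∑ p ∈ (Finset.univ : Finset (TInterval N × TInterval N)),
          ∑ I ∈ Finset.univ.filter (fun I : TInterval N => Contains I T),
            (if (max (p.1.val.1 : ℕ) (p.2.val.1 : ℕ) < min (p.1.val.2 : ℕ) (p.2.val.2 : ℕ) ∧
              (I.val.1 : ℕ) = max (p.1.val.1 : ℕ) (p.2.val.1 : ℕ) ∧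
              (I.val.2 : ℕ) = min (p.1.val.2 : ℕ) (p.2.val.2 : ℕ)) then k p.1 * k' p.2 else 0) := by
    rw [Finset.sum_comm]
    apply Finset.sum_congr rfl
    intro I _
    rw [Finset.sum_filter]
  rw [hswap]
  rw [Finset.sum_filter]
  apply Finset.sum_congr rfl
  intro p _
  by_cases hp : Contains p.1 T ∧ Contains p.2 T
  · rw [if_pos hp]
    obtain ⟨⟨h11, h12⟩, ⟨h21, h22⟩⟩ := hp
    have hmm : max (p.1.val.1 : ℕ) (p.2.val.1 : ℕ) < min (p.1.val.2 : ℕ) (p.2.val.2 : ℕ) := by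
      omega
    have hN2 : min (p.1.val.2 : ℕ) (p.2.val.2 : ℕ) < N + 1 := by
      have := p.1.val.2.isLt; have := p.2.val.2.isLt; omega
    set I₀ : TInterval N := ⟨(⟨max (p.1.val.1 : ℕ) (p.2.val.1 : ℕ), by omega⟩,
      ⟨min (p.1.val.2 : ℕ) (p.2.val.2 : ℕ), hN2⟩), by
        simp only [Fin.mk_lt_mk]; exact hmm⟩ with hI0
    have hI01 : (I₀.val.1 : ℕ) = max (p.1.val.1 : ℕ) (p.2.val.1 : ℕ) := rfl
    have hI02 : (I₀.val.2 : ℕ) = min (p.1.val.2 : ℕ) (p.2.val.2 : ℕ) := rfl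
    rw [Finset.sum_eq_single_of_mem I₀
        (by rw [Finset.mem_filter]; simp only [Finset.mem_univ, true_and, Contains, hI01, hI02]
            have := hI01; have := hI02; omega)]
    · rw [if_pos ⟨hmm, hI01, hI02⟩]
    · intro I hI hne
      rw [if_neg]
      rintro ⟨_, h1, h2⟩
      exact hne (TInterval.ext' (by omega) (by omega))
  · rw [if_neg hp]
    apply Finset.sum_eq_zero
    intro I hI
    rw [if_neg]
    rintro ⟨hmm, h1, h2⟩
    have hIT : Contains I T := (Finset.mem_filter.mp hI).2
    obtain ⟨hT1, hT2⟩ := hIT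
    exact hp ⟨⟨by omega, by omega⟩, ⟨by omega, by omega⟩⟩

end Aux


theorem slice_is_semiring_hom {N : ℕ} (hN : 1 ≤ N) {K : Type*} [CommSemiring K]
    (T : ℕ) (hT : T < N) :
    slice (zeroT N K) T = 0 ∧
    slice (oneT N K) T = 1 ∧
    (∀ k k' : TempEl N K, Coalesced k → Coalesced k' →
        slice (tadd k k') T = slice k T + slice k' T ∧
        slice (tmul k k') T = slice k T * slice k' T) := by
    classical
  refine ⟨?_, ?_, ?_⟩
  · unfold TemporalK.slice zeroT
    exact Finset.sum_eq_zero (fun _ _ => rfl)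
  · unfold TemporalK.slice oneT
    have hI0lt : (0 : ℕ) < N := hN
    set I₀ : TInterval N := ⟨(⟨0, by omega⟩, ⟨N, by omega⟩), by
      simp only [Fin.mk_lt_mk]; exact hI0lt⟩ with hI0
    have hI01 : (I₀.val.1 : ℕ) = 0 := rfl
    have hI02 : (I₀.val.2 : ℕ) = N := rfl
    rw [Finset.sum_eq_single_of_mem I₀
        (by rw [Finset.mem_filter]; simp only [Finset.mem_univ, true_and, Contains, hI01, hI02]
            have := hI01; have := hI02; omega)]
    · rw [if_pos ⟨hI01, hI02⟩]
    · intro I hI hne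
      rw [if_neg]
      rintro ⟨h1, h2⟩
      exact hne (TInterval.ext' (by omega) (by omega))
  · intro k k' _ _
    constructor
    · rw [tadd, slice_coal _ T hT, slice_padd]
    · rw [tmul, slice_coal _ T hT, slice_pmul _ _ T hT]
end
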